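/- arXiv:1909.03568 — 4 statements merged into one kernel-verified Lean document; each statement's English description precedes it below -/
import Mathlib

section
/- Backward-forward reachable set splitting (Theorem 1): For every Lebesgue-integrable control u₁ : [0,T] → U₁ of Player 1 and every t ∈ [0,T], the constrained reachable set equals the constrained forward reachable set: X[u₁](t) = X_F[u₁](t). -/
open Set MeasureTheory

noncomputable section

/-- Carathéodory (integral) form of the controlled ODE
`ẋ(τ) = f(x(τ), u₁(τ), u₂(τ))` for a.e. `τ ∈ [a,b]`, for an absolutely
continuous trajectory `x`. -/
def SolvesODE {nx nu : ℕ}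
    (f : (Fin nx → ℝ) → (Fin nu → ℝ) → (Fin nu → ℝ) → (Fin nx → ℝ))
    (u₁ u₂ : ℝ → (Fin nu → ℝ)) (a b : ℝ) (x : ℝ → (Fin nx → ℝ)) : Prop :=
  IntervalIntegrable (fun s => f (x s) (u₁ s) (u₂ s)) volume a b ∧
    ∀ τ ∈ Icc a b, x τ = x a + ∫ s in a..τ, f (x s) (u₁ s) (u₂ s)

/-- A measurable control of Player 2 taking values in `U₂` on `[a,b]`. -/
def AdmissibleCtrl {nu : ℕ} (U₂ : Set (Fin nu → ℝ)) (a b : ℝ)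
    (u₂ : ℝ → (Fin nu → ℝ)) : Prop :=
  Measurable u₂ ∧ ∀ τ ∈ Icc a b, u₂ τ ∈ U₂

/-- The set `𝕏[u₁]` of feasible state trajectories of Player 2. -/
def FeasibleTrajSet {nx nu : ℕ}
    (f : (Fin nx → ℝ) → (Fin nu → ℝ) → (Fin nu → ℝ) → (Fin nx → ℝ))
    (U₂ : Set (Fin nu → ℝ)) (X₂ : ℝ → Set (Fin nx → ℝ))
    (x₀ : Fin nx → ℝ) (T : ℝ) (u₁ : ℝ → (Fin nu → ℝ)) :
    Set (ℝ → (Fin nx → ℝ)) :=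
  {x | ∃ u₂, AdmissibleCtrl U₂ 0 T u₂ ∧ SolvesODE f u₁ u₂ 0 T x ∧
      x 0 = x₀ ∧ ∀ τ ∈ Icc 0 T, x τ ∈ X₂ τ}

/-- The reachable set `X[u₁](t)`. -/
def reachSet {nx nu : ℕ}
    (f : (Fin nx → ℝ) → (Fin nu → ℝ) → (Fin nu → ℝ) → (Fin nx → ℝ))
    (U₂ : Set (Fin nu → ℝ)) (X₂ : ℝ → Set (Fin nx → ℝ))
    (x₀ : Fin nx → ℝ) (T : ℝ) (u₁ : ℝ → (Fin nu → ℝ)) (t : ℝ) :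
    Set (Fin nx → ℝ) :=
  {ξ | ∃ x ∈ FeasibleTrajSet f U₂ X₂ x₀ T u₁, x t = ξ}

/-- The backward reachable set `X_B[u₁](t)`. -/
def backSet {nx nu : ℕ}
    (f : (Fin nx → ℝ) → (Fin nu → ℝ) → (Fin nu → ℝ) → (Fin nx → ℝ))
    (U₂ : Set (Fin nu → ℝ)) (X₂ : ℝ → Set (Fin nx → ℝ))
    (T : ℝ) (u₁ : ℝ → (Fin nu → ℝ)) (t : ℝ) : Set (Fin nx → ℝ) :=
  {ξ | ∃ x u₂, AdmissibleCtrl U₂ t T u₂ ∧ SolvesODE f u₁ u₂ t T x ∧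
      x t = ξ ∧ ∀ τ ∈ Icc t T, x τ ∈ X₂ τ}

/-- The constrained forward reachable set `X_F[u₁](t)`. -/
def fwdSet {nx nu : ℕ}
    (f : (Fin nx → ℝ) → (Fin nu → ℝ) → (Fin nu → ℝ) → (Fin nx → ℝ))
    (U₂ : Set (Fin nu → ℝ)) (X₂ : ℝ → Set (Fin nx → ℝ))
    (x₀ : Fin nx → ℝ) (T : ℝ) (u₁ : ℝ → (Fin nu → ℝ)) (t : ℝ) :
    Set (Fin nx → ℝ) :=
  {ξ | ∃ x u₂, AdmissibleCtrl U₂ 0 t u₂ ∧ SolvesODE f u₁ u₂ 0 t x ∧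
      x 0 = x₀ ∧ x t = ξ ∧ ∀ τ ∈ Icc 0 t, x τ ∈ backSet f U₂ X₂ T u₁ τ}

/-- Restriction of a solution to a subinterval. -/
lemma SolvesODE.restrict {nx nu : ℕ}
    {f : (Fin nx → ℝ) → (Fin nu → ℝ) → (Fin nu → ℝ) → (Fin nx → ℝ)}
    {u₁ u₂ : ℝ → (Fin nu → ℝ)} {a b c d : ℝ} {x : ℝ → (Fin nx → ℝ)}
    (h : SolvesODE f u₁ u₂ a b x) (hac : a ≤ c) (hcd : c ≤ d) (hdb : d ≤ b) :
    SolvesODE f u₁ u₂ c d x := by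
  obtain ⟨hint, heq⟩ := h
  have hab : a ≤ b := hac.trans (hcd.trans hdb)
  have hsub : uIcc c d ⊆ uIcc a b := by
    rw [uIcc_of_le hcd, uIcc_of_le hab]
    exact Icc_subset_Icc hac hdb
  refine ⟨hint.mono_set hsub, fun τ hτ => ?_⟩
  have h1 : IntervalIntegrable (fun s => f (x s) (u₁ s) (u₂ s)) volume a c :=
    hint.mono_set (by
      rw [uIcc_of_le hac, uIcc_of_le hab]
      exact Icc_subset_Icc le_rfl (hcd.trans hdb))
  have h2 : IntervalIntegrable (fun s => f (x s) (u₁ s) (u₂ s)) volume c τ :=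
    hint.mono_set (by
      rw [uIcc_of_le hτ.1, uIcc_of_le hab]
      exact Icc_subset_Icc hac (hτ.2.trans hdb))
  have hxc := heq c ⟨hac, hcd.trans hdb⟩
  have hxτ := heq τ ⟨hac.trans hτ.1, hτ.2.trans hdb⟩
  have hadd := intervalIntegral.integral_add_adjacent_intervals h1 h2
  rw [hxτ, hxc, ← hadd]
  abel

/-- **Theorem 1 (backward-forward reachable set splitting).**
For every Lebesgue-integrable control `u₁ : [0,T] → U₁` and every `t ∈ [0,T]`,
the constrained reachable set equals the constrained forward reachable set:
`X[u₁](t) = X_F[u₁](t)`. -/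
theorem backward_forward_splitting
    {nx nu : ℕ} (T : ℝ) (hT : 0 < T)
    (f : (Fin nx → ℝ) → (Fin nu → ℝ) → (Fin nu → ℝ) → (Fin nx → ℝ))
    (hf_cont : Continuous fun p : (Fin nx → ℝ) × (Fin nu → ℝ) × (Fin nu → ℝ) =>
      f p.1 p.2.1 p.2.2)
    (hf_lip : ∀ v₁ v₂ : Fin nu → ℝ, LocallyLipschitz fun ξ => f ξ v₁ v₂)
    (U₁ U₂ : Set (Fin nu → ℝ))
    (hU₁ : U₁.Nonempty ∧ Convex ℝ U₁ ∧ IsCompact U₁)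
    (hU₂ : U₂.Nonempty ∧ Convex ℝ U₂ ∧ IsCompact U₂)
    (x₀ : Fin nx → ℝ) (X₂ : ℝ → Set (Fin nx → ℝ))
    (u₁ : ℝ → (Fin nu → ℝ)) (hu₁_meas : Measurable u₁)
    (hu₁_int : IntegrableOn u₁ (Icc 0 T))
    (hu₁_mem : ∀ t ∈ Icc (0:ℝ) T, u₁ t ∈ U₁)
    (t : ℝ) (ht : t ∈ Icc (0:ℝ) T) :
    reachSet f U₂ X₂ x₀ T u₁ t = fwdSet f U₂ X₂ x₀ T u₁ t := by
  obtain ⟨ht0, htT⟩ := ht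
  ext ξ
  constructor
  · -- reachSet ⊆ fwdSet
    rintro ⟨x, ⟨u₂, hadm, hsol, hx0, hX⟩, hxt⟩
    refine ⟨x, u₂, ⟨hadm.1, fun τ hτ => hadm.2 τ ⟨hτ.1, hτ.2.trans htT⟩⟩,
      hsol.restrict le_rfl ht0 htT, hx0, hxt, fun τ hτ => ?_⟩
    exact ⟨x, u₂, ⟨hadm.1, fun σ hσ => hadm.2 σ ⟨hτ.1.trans hσ.1, hσ.2⟩⟩,
      hsol.restrict hτ.1 (hτ.2.trans htT) le_rfl, rfl,
      fun σ hσ => hX σ ⟨hτ.1.trans hσ.1, hσ.2⟩⟩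
  · -- fwdSet ⊆ reachSet
    rintro ⟨x, u₂, hadm, hsol, hx0, hxt, hback⟩
    obtain ⟨y, v₂, hadmy, hsoly, hyt, hXy⟩ := hback t ⟨ht0, le_rfl⟩
    set z : ℝ → (Fin nx → ℝ) := fun τ => if τ ≤ t then x τ else y τ with hz
    set w : ℝ → (Fin nu → ℝ) := fun τ => if τ ≤ t then u₂ τ else v₂ τ with hw
    have hz0 : z 0 = x 0 := if_pos ht0
    have hzt : z t = x t := if_pos le_rfl
    -- the integrand for z agrees with the one for x on s ≤ t, for y on s > t
    have hFle : ∀ s : ℝ, s ≤ t →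
        f (z s) (u₁ s) (w s) = f (x s) (u₁ s) (u₂ s) := by
      intro s hs; simp only [hz, hw, if_pos hs]
    have hFgt : ∀ s : ℝ, t < s →
        f (z s) (u₁ s) (w s) = f (y s) (u₁ s) (v₂ s) := by
      intro s hs; simp only [hz, hw, if_neg (not_le.2 hs)]
    have hint1 : IntervalIntegrable (fun s => f (z s) (u₁ s) (w s)) volume 0 t := by
      refine hsol.1.congr ?_
      intro s hs
      rw [uIoc_of_le ht0] at hs
      exact (hFle s hs.2).symm
    have hint2 : IntervalIntegrable (fun s => f (z s) (u₁ s) (w s)) volume t T := by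
      refine hsoly.1.congr ?_
      intro s hs
      rw [uIoc_of_le htT] at hs
      exact (hFgt s hs.1).symm
    have hintz : IntervalIntegrable (fun s => f (z s) (u₁ s) (w s)) volume 0 T :=
      hint1.trans hint2
    have hzτ : ∀ τ ∈ Icc (0:ℝ) T,
        z τ = z 0 + ∫ s in (0:ℝ)..τ, f (z s) (u₁ s) (w s) := by
      intro τ hτ
      by_cases h : τ ≤ t
      · have : z τ = x τ := if_pos h
        rw [this, hz0, hsol.2 τ ⟨hτ.1, h⟩]
        congr 1
        refine (intervalIntegral.integral_congr fun s hs => ?_).symm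
        rw [uIcc_of_le hτ.1] at hs
        exact hFle s (hs.2.trans h)
      · push_neg at h
        have hzτy : z τ = y τ := if_neg (not_le.2 h)
        have hyτ := hsoly.2 τ ⟨h.le, hτ.2⟩
        have hItτ : ∫ s in t..τ, f (y s) (u₁ s) (v₂ s)
            = ∫ s in t..τ, f (z s) (u₁ s) (w s) := by
          refine intervalIntegral.integral_congr_ae' ?_ ?_
          · exact Filter.Eventually.of_forall fun s hs => (hFgt s hs.1).symm
          · refine Filter.Eventually.of_forall fun s hs => absurd hs ?_
            rw [Ioc_eq_empty (by exact not_lt.2 h.le)]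
            exact notMem_empty s
        have hI0t : x t = z 0 + ∫ s in (0:ℝ)..t, f (z s) (u₁ s) (w s) := by
          rw [hz0, hsol.2 t ⟨ht0, le_rfl⟩]
          congr 1
          refine (intervalIntegral.integral_congr fun s hs => ?_).symm
          rw [uIcc_of_le ht0] at hs
          exact hFle s hs.2
        have hadd := intervalIntegral.integral_add_adjacent_intervals hint1
          (hint2.mono_set (by
            rw [uIcc_of_le h.le, uIcc_of_le htT]
            exact Icc_subset_Icc le_rfl hτ.2))
        rw [hzτy, hyτ, hyt, hItτ, hI0t, ← hadd]
        abel
    refine ⟨z, ⟨w, ⟨?_, ?_⟩, ⟨hintz, hzτ⟩, by rw [hz0, hx0], fun τ hτ => ?_⟩, by rw [hzt, hxt]⟩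
    · exact Measurable.ite measurableSet_Iic hadm.1 hadmy.1
    · intro τ hτ
      by_cases h : τ ≤ t
      · simpa only [hw, if_pos h] using hadm.2 τ ⟨hτ.1, h⟩
      · push_neg at h
        simpa only [hw, if_neg (not_le.2 h)] using hadmy.2 τ ⟨h.le, hτ.2⟩
    · by_cases h : τ ≤ t
      · obtain ⟨x', u', hadm', hsol', hx'τ, hX'⟩ := hback τ ⟨hτ.1, h⟩
        have : z τ = x' τ := by simp only [hz]; rw [if_pos h, hx'τ]
        rw [this]
        exact hX' τ ⟨le_rfl, hτ.2⟩
      · push_neg at h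
        have : z τ = y τ := if_neg (not_le.2 h)
        rw [this]
        exact hXy τ ⟨h.le, hτ.2⟩

end
end

section
/- First inclusion in the splitting theorem (concatenation of forward and backward trajectories): For every Lebesgue-integrable control u₁ : [0,T] → U₁ and every t ∈ [0,T], X_F[u₁](t) ⊆ X[u₁](t). -/
open Set MeasureTheory

noncomputable section

/-- **First inclusion in the splitting theorem** (concatenation of forward and
backward trajectories): for every Lebesgue-integrable control
`u₁ : [0,T] → U₁` and every `t ∈ [0,T]`, `X_F[u₁](t) ⊆ X[u₁](t)`. -/
theorem fwdSet_subset_reachSet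
    {nx nu : ℕ} (T : ℝ) (hT : 0 < T)
    (f : (Fin nx → ℝ) → (Fin nu → ℝ) → (Fin nu → ℝ) → (Fin nx → ℝ))
    (hf_cont : Continuous fun p : (Fin nx → ℝ) × (Fin nu → ℝ) × (Fin nu → ℝ) =>
      f p.1 p.2.1 p.2.2)
    (hf_lip : ∀ v₁ v₂ : Fin nu → ℝ, LocallyLipschitz fun ξ => f ξ v₁ v₂)
    (U₁ U₂ : Set (Fin nu → ℝ))
    (hU₁ : U₁.Nonempty ∧ Convex ℝ U₁ ∧ IsCompact U₁)
    (hU₂ : U₂.Nonempty ∧ Convex ℝ U₂ ∧ IsCompact U₂)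
    (x₀ : Fin nx → ℝ) (X₂ : ℝ → Set (Fin nx → ℝ))
    (u₁ : ℝ → (Fin nu → ℝ)) (hu₁_meas : Measurable u₁)
    (hu₁_int : IntegrableOn u₁ (Icc 0 T))
    (hu₁_mem : ∀ t ∈ Icc (0:ℝ) T, u₁ t ∈ U₁)
    (t : ℝ) (ht : t ∈ Icc (0:ℝ) T) :
    fwdSet f U₂ X₂ x₀ T u₁ t ⊆ reachSet f U₂ X₂ x₀ T u₁ t := by
  rintro ξ ⟨x, u₂, ⟨hu₂m, hu₂mem⟩, ⟨hxint, hxeq⟩, hx0, hxt, hback⟩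
  obtain ⟨y, v₂, ⟨hv₂m, hv₂mem⟩, ⟨hyint, hyeq⟩, hyt, hyX⟩ := hback t ⟨ht.1, le_rfl⟩
  classical
  set z : ℝ → (Fin nx → ℝ) := fun τ => if τ ≤ t then x τ else y τ with hz
  set w : ℝ → (Fin nu → ℝ) := fun τ => if τ ≤ t then u₂ τ else v₂ τ with hw
  have hzx : ∀ s, s ≤ t → z s = x s := fun s hs => if_pos hs
  have hzy : ∀ s, t ≤ s → z s = y s := by
    intro s hs
    by_cases h : s ≤ t
    · have : s = t := le_antisymm h hs
      subst this
      simp [hz, hyt]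
    · simp [hz, h]
  have hgx : ∀ s, s ≤ t → f (z s) (u₁ s) (w s) = f (x s) (u₁ s) (u₂ s) := by
    intro s hs; simp [hz, hw, hs]
  have hgy : ∀ s, t < s → f (z s) (u₁ s) (w s) = f (y s) (u₁ s) (v₂ s) := by
    intro s hs; simp [hz, hw, not_le.mpr hs]
  have hInt1 : IntervalIntegrable (fun s => f (z s) (u₁ s) (w s)) volume 0 t := by
    rw [intervalIntegrable_iff_integrableOn_Ioc_of_le ht.1] at hxint ⊢
    exact hxint.congr_fun (fun s hs => (hgx s hs.2).symm) measurableSet_Ioc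
  have hInt2 : IntervalIntegrable (fun s => f (z s) (u₁ s) (w s)) volume t T := by
    rw [intervalIntegrable_iff_integrableOn_Ioc_of_le ht.2] at hyint ⊢
    exact hyint.congr_fun (fun s hs => (hgy s hs.1).symm) measurableSet_Ioc
  have hIntFull : IntervalIntegrable (fun s => f (z s) (u₁ s) (w s)) volume 0 T :=
    hInt1.trans hInt2
  have hcongr1 : ∀ τ, 0 ≤ τ → τ ≤ t →
      (∫ s in (0:ℝ)..τ, f (z s) (u₁ s) (w s)) = ∫ s in (0:ℝ)..τ, f (x s) (u₁ s) (u₂ s) := by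
    intro τ h0 hτ
    apply intervalIntegral.integral_congr
    intro s hs
    rw [uIcc_of_le h0] at hs
    exact hgx s (hs.2.trans hτ)
  refine ⟨z, ⟨w, ⟨?_, ?_⟩, ⟨hIntFull, ?_⟩, ?_, ?_⟩, ?_⟩
  · exact Measurable.ite measurableSet_Iic hu₂m hv₂m
  · intro τ hτ
    by_cases h : τ ≤ t
    · simpa [hw, h] using hu₂mem τ ⟨hτ.1, h⟩
    · simpa [hw, h] using hv₂mem τ ⟨le_of_not_ge h, hτ.2⟩
  · intro τ hτ
    by_cases h : τ ≤ t
    · rw [hzx τ h, hzx 0 ht.1, hcongr1 τ hτ.1 h]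
      exact hxeq τ ⟨hτ.1, h⟩
    · have htτ : t ≤ τ := le_of_not_ge h
      have hsplit : (∫ s in (0:ℝ)..τ, f (z s) (u₁ s) (w s))
          = (∫ s in (0:ℝ)..t, f (z s) (u₁ s) (w s)) + ∫ s in t..τ, f (z s) (u₁ s) (w s) := by
        refine (intervalIntegral.integral_add_adjacent_intervals hInt1 ?_).symm
        exact hInt2.mono_set (by rw [uIcc_of_le htτ, uIcc_of_le ht.2]; exact Icc_subset_Icc le_rfl hτ.2)
      have hcongr2 : (∫ s in t..τ, f (z s) (u₁ s) (w s)) = ∫ s in t..τ, f (y s) (u₁ s) (v₂ s) := by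
        apply intervalIntegral.integral_congr_ae
        filter_upwards with s hs
        rw [uIoc_of_le htτ] at hs
        exact hgy s hs.1
      rw [hzy τ htτ, hzx 0 ht.1, hsplit, hcongr1 t ht.1 le_rfl, hcongr2,
        hyeq τ ⟨htτ, hτ.2⟩, hyt, hxeq t ⟨ht.1, le_rfl⟩, add_assoc]
  · rw [hzx 0 ht.1]; exact hx0
  · intro τ hτ
    by_cases h : τ ≤ t
    · obtain ⟨y', v', _, _, hy't, hy'X⟩ := hback τ ⟨hτ.1, h⟩
      rw [hzx τ h, ← hy't]
      exact hy'X τ ⟨le_rfl, hτ.2⟩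
    · rw [hzy τ (le_of_not_ge h)]
      exact hyX τ ⟨le_of_not_ge h, hτ.2⟩
  · rw [hzx t le_rfl]; exact hxt

end
end

section
/- Second inclusion in the splitting theorem: For every Lebesgue-integrable control u₁ : [0,T] → U₁ and every t ∈ [0,T], X[u₁](t) ⊆ X_F[u₁](t). -/
open Set MeasureTheory

noncomputable section

/-- **Second inclusion in the splitting theorem**: for every
Lebesgue-integrable control `u₁ : [0,T] → U₁` and every `t ∈ [0,T]`,
`X[u₁](t) ⊆ X_F[u₁](t)`. -/
theorem reachSet_subset_fwdSet
    {nx nu : ℕ} (T : ℝ) (hT : 0 < T)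
    (f : (Fin nx → ℝ) → (Fin nu → ℝ) → (Fin nu → ℝ) → (Fin nx → ℝ))
    (hf_cont : Continuous fun p : (Fin nx → ℝ) × (Fin nu → ℝ) × (Fin nu → ℝ) =>
      f p.1 p.2.1 p.2.2)
    (hf_lip : ∀ v₁ v₂ : Fin nu → ℝ, LocallyLipschitz fun ξ => f ξ v₁ v₂)
    (U₁ U₂ : Set (Fin nu → ℝ))
    (hU₁ : U₁.Nonempty ∧ Convex ℝ U₁ ∧ IsCompact U₁)
    (hU₂ : U₂.Nonempty ∧ Convex ℝ U₂ ∧ IsCompact U₂)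
    (x₀ : Fin nx → ℝ) (X₂ : ℝ → Set (Fin nx → ℝ))
    (u₁ : ℝ → (Fin nu → ℝ)) (hu₁_meas : Measurable u₁)
    (hu₁_int : IntegrableOn u₁ (Icc 0 T))
    (hu₁_mem : ∀ t ∈ Icc (0:ℝ) T, u₁ t ∈ U₁)
    (t : ℝ) (ht : t ∈ Icc (0:ℝ) T) :
    reachSet f U₂ X₂ x₀ T u₁ t ⊆ fwdSet f U₂ X₂ x₀ T u₁ t := by
  rintro ξ ⟨x, ⟨u₂, hadm, hode, hx0, hX₂⟩, hxt⟩
  obtain ⟨ht0, htT⟩ := ht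
  have hint := hode.1
  have key : ∀ a b : ℝ, 0 ≤ a → a ≤ T → 0 ≤ b → b ≤ T →
      IntervalIntegrable (fun s => f (x s) (u₁ s) (u₂ s)) volume a b := by
    intro a b ha haT hb hbT
    refine hint.mono_set ?_
    exact uIcc_subset_uIcc (by rw [uIcc_of_le hT.le]; exact ⟨ha, haT⟩)
      (by rw [uIcc_of_le hT.le]; exact ⟨hb, hbT⟩)
  have hval : ∀ a b : ℝ, 0 ≤ a → a ≤ T → 0 ≤ b → b ≤ T →
      x b = x a + ∫ s in a..b, f (x s) (u₁ s) (u₂ s) := by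
    intro a b ha haT hb hbT
    have hA := hode.2 a ⟨ha, haT⟩
    have hB := hode.2 b ⟨hb, hbT⟩
    have hadd : (∫ s in (0:ℝ)..a, f (x s) (u₁ s) (u₂ s)) +
        (∫ s in a..b, f (x s) (u₁ s) (u₂ s)) =
        ∫ s in (0:ℝ)..b, f (x s) (u₁ s) (u₂ s) :=
      intervalIntegral.integral_add_adjacent_intervals
        (key 0 a le_rfl hT.le ha haT) (key a b ha haT hb hbT)
    rw [hB, hA, ← hadd]
    abel
  refine ⟨x, u₂, ⟨hadm.1, fun τ hτ => hadm.2 τ ⟨hτ.1, hτ.2.trans htT⟩⟩,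
    ⟨key 0 t le_rfl hT.le ht0 htT,
      fun τ hτ => hval 0 τ le_rfl hT.le hτ.1 (hτ.2.trans htT)⟩,
    hx0, hxt, ?_⟩
  intro τ hτ
  have hτ0 : (0:ℝ) ≤ τ := hτ.1
  have hτT : τ ≤ T := hτ.2.trans htT
  refine ⟨x, u₂, ⟨hadm.1, fun σ hσ => hadm.2 σ ⟨hτ0.trans hσ.1, hσ.2⟩⟩,
    ⟨key τ T hτ0 hτT hT.le le_rfl,
      fun σ hσ => hval τ σ hτ0 hτT (hτ0.trans hσ.1) hσ.2⟩,
    rfl, fun σ hσ => hX₂ σ ⟨hτ0.trans hσ.1, hσ.2⟩⟩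

end
end

section
/- Ellipsoidal enclosure of a Minkowski sum (Proposition 2, part 1): For all q₁, q₂ ∈ ℝⁿ, all positive definite n×n matrices Q₁, Q₂, and every λ ∈ (0,1), the Minkowski sum of ellipsoids satisfies E(q₁, Q₁) ⊕ E(q₂, Q₂) ⊆ E( q₁ + q₂, (1/λ)·Q₁ + (1/(1−λ))·Q₂ ), where A ⊕ B = { a + b : a ∈ A, b ∈ B }. -/
open Matrix
open scoped Pointwise

noncomputable section

/-- The ellipsoid `E(q, Q) = { q + Q^{1/2} v : vᵀv ≤ 1 }` with center `q` and
positive semidefinite shape matrix `Q` (empty if `Q` is not positive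
semidefinite). -/
def ellipsoid {n : ℕ} (q : Fin n → ℝ) (Q : Matrix (Fin n) (Fin n) ℝ) :
    Set (Fin n → ℝ) :=
  {x | ∃ hQ : Q.PosSemidef, ∃ v : Fin n → ℝ, v ⬝ᵥ v ≤ 1 ∧ x = q + ((hQ.1.eigenvectorUnitary : Matrix (Fin n) (Fin n) ℝ) *
      diagonal (fun i => Real.sqrt (hQ.1.eigenvalues i)) *
      star (hQ.1.eigenvectorUnitary : Matrix (Fin n) (Fin n) ℝ)) *ᵥ v}

def psdSqrt' {n : ℕ} {Q : Matrix (Fin n) (Fin n) ℝ} (hQ : Q.PosSemidef) : Matrix (Fin n) (Fin n) ℝ :=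
  (hQ.1.eigenvectorUnitary : Matrix (Fin n) (Fin n) ℝ) *
      diagonal (fun i => Real.sqrt (hQ.1.eigenvalues i)) *
      star (hQ.1.eigenvectorUnitary : Matrix (Fin n) (Fin n) ℝ)

lemma psdSqrt'_mul_self {n : ℕ} {Q : Matrix (Fin n) (Fin n) ℝ} (hQ : Q.PosSemidef) :
    psdSqrt' hQ * psdSqrt' hQ = Q := by
  unfold psdSqrt'
  set U : Matrix (Fin n) (Fin n) ℝ := (hQ.1.eigenvectorUnitary : Matrix (Fin n) (Fin n) ℝ) with hU
  have hUU : star U * U = 1 := Unitary.coe_star_mul_self _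
  have hD : diagonal (fun i => Real.sqrt (hQ.1.eigenvalues i)) *
      diagonal (fun i => Real.sqrt (hQ.1.eigenvalues i)) = diagonal (RCLike.ofReal ∘ hQ.1.eigenvalues) := by
    rw [diagonal_mul_diagonal]
    congr 1
    funext i
    simp [Real.mul_self_sqrt (hQ.eigenvalues_nonneg i)]
  conv_rhs => rw [hQ.1.spectral_theorem, Unitary.conjStarAlgAut_apply]
  rw [← hD]
  calc _ = U * diagonal (fun i => Real.sqrt (hQ.1.eigenvalues i)) * (star U * U) *
      diagonal (fun i => Real.sqrt (hQ.1.eigenvalues i)) * star U := by simp only [mul_assoc]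
    _ = _ := by rw [hUU, mul_one]; simp only [mul_assoc]; rfl

lemma psdSqrt'_transpose {n : ℕ} {Q : Matrix (Fin n) (Fin n) ℝ} (hQ : Q.PosSemidef) :
    (psdSqrt' hQ)ᵀ = psdSqrt' hQ := by
  unfold psdSqrt'
  rw [← conjTranspose_eq_transpose_of_trivial]
  simp [star_eq_conjTranspose, mul_assoc]

lemma dot_self_nonneg' {n : ℕ} (a : Fin n → ℝ) : 0 ≤ a ⬝ᵥ a :=
  Finset.sum_nonneg fun i _ => mul_self_nonneg _

lemma amgm_dot {n : ℕ} (a b : Fin n → ℝ) {t : ℝ} (ht : 0 < t) :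
    2 * (a ⬝ᵥ b) ≤ t * (a ⬝ᵥ a) + t⁻¹ * (b ⬝ᵥ b) := by
  have h := dot_self_nonneg' (t • a - b)
  have hexp : (t • a - b) ⬝ᵥ (t • a - b)
      = t^2 * (a ⬝ᵥ a) - 2*t*(a ⬝ᵥ b) + b ⬝ᵥ b := by
    simp [sub_dotProduct, dotProduct_sub, smul_dotProduct, dotProduct_smul,
      dotProduct_comm b a, smul_eq_mul]
    ring
  rw [hexp] at h
  have h2 : 2 * t * (a ⬝ᵥ b) ≤ t^2 * (a ⬝ᵥ a) + b ⬝ᵥ b := by linarith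
  have := mul_le_mul_of_nonneg_left h2 (le_of_lt (inv_pos.mpr ht))
  have ht' : t ≠ 0 := ht.ne'
  calc 2 * (a ⬝ᵥ b) = t⁻¹ * (2 * t * (a ⬝ᵥ b)) := by field_simp
    _ ≤ t⁻¹ * (t^2 * (a ⬝ᵥ a) + b ⬝ᵥ b) := this
    _ = t * (a ⬝ᵥ a) + t⁻¹ * (b ⬝ᵥ b) := by field_simp

lemma posdef_smul {n : ℕ} {Q : Matrix (Fin n) (Fin n) ℝ} (hQ : Q.PosDef)
    {c : ℝ} (hc : 0 < c) : (c • Q).PosDef := by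
  refine ⟨?_, fun x hx => ?_⟩
  · unfold Matrix.IsHermitian
    rw [conjTranspose_smul, hQ.isHermitian.eq]
    simp
  · exact (hQ.smul hc).2 hx

/-- **Ellipsoidal enclosure of a Minkowski sum (Proposition 2, part 1).**
For all centers `q₁, q₂`, positive definite shape matrices `Q₁, Q₂` and every
`λ ∈ (0,1)`,
`E(q₁,Q₁) ⊕ E(q₂,Q₂) ⊆ E(q₁+q₂, (1/λ)Q₁ + (1/(1-λ))Q₂)`. -/
theorem ellipsoid_minkowski_sum_subset
    {n : ℕ} (q₁ q₂ : Fin n → ℝ) (Q₁ Q₂ : Matrix (Fin n) (Fin n) ℝ)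
    (hQ₁ : Q₁.PosDef) (hQ₂ : Q₂.PosDef) (lam : ℝ) (hlam : lam ∈ Set.Ioo (0:ℝ) 1) :
    ellipsoid q₁ Q₁ + ellipsoid q₂ Q₂ ⊆
      ellipsoid (q₁ + q₂) ((1 / lam) • Q₁ + (1 / (1 - lam)) • Q₂) := by
  obtain ⟨hl0, hl1⟩ := hlam
  have h1l : (0:ℝ) < 1 - lam := by linarith
  intro x hx
  rw [Set.mem_add] at hx
  obtain ⟨a, ha, b, hb, rfl⟩ := hx
  obtain ⟨h₁, v₁, hv₁, rfl⟩ := ha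
  obtain ⟨h₂, v₂, hv₂, rfl⟩ := hb
  set Q : Matrix (Fin n) (Fin n) ℝ := (1 / lam) • Q₁ + (1 / (1 - lam)) • Q₂ with hQdef
  have hQ : Q.PosDef :=
    (posdef_smul hQ₁ (by positivity)).add (posdef_smul hQ₂ (by positivity))
  set A := psdSqrt' h₁ with hA
  set B := psdSqrt' h₂ with hB
  set S := psdSqrt' hQ.posSemidef with hS
  have hSS : S * S = Q := psdSqrt'_mul_self hQ.posSemidef
  have hdetS : IsUnit S.det := by
    have : S.det * S.det = Q.det := by rw [← det_mul, hSS]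
    have hQd := hQ.det_pos
    have : S.det ≠ 0 := by intro h; rw [h, mul_zero] at this; linarith
    exact this.isUnit
  have hSinv : S * S⁻¹ = 1 := mul_nonsing_inv S hdetS
  have hSinv' : S⁻¹ * S = 1 := nonsing_inv_mul S hdetS
  have hSsym : Sᵀ = S := psdSqrt'_transpose hQ.posSemidef
  have hSisym : S⁻¹ᵀ = S⁻¹ := by rw [transpose_nonsing_inv, hSsym]
  have hAsym : Aᵀ = A := psdSqrt'_transpose h₁
  have hBsym : Bᵀ = B := psdSqrt'_transpose h₂
  have hAA : A * A = Q₁ := psdSqrt'_mul_self h₁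
  have hBB : B * B = Q₂ := psdSqrt'_mul_self h₂
  set u : Fin n → ℝ := A *ᵥ v₁ + B *ᵥ v₂ with hu
  set w : Fin n → ℝ := S⁻¹ *ᵥ u with hw
  set y : Fin n → ℝ := S⁻¹ *ᵥ w with hy
  have hSw : S *ᵥ w = u := by
    rw [hw, mulVec_mulVec, hSinv, one_mulVec]
  have hQy : Q *ᵥ y = u := by
    rw [hy, hw, ← hSS, ← mulVec_mulVec (S⁻¹ *ᵥ S⁻¹ *ᵥ u) S S,
      mulVec_mulVec (S⁻¹ *ᵥ u) S S⁻¹, hSinv, one_mulVec,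
      mulVec_mulVec u S S⁻¹, hSinv, one_mulVec]
  have hsymdot : ∀ (M : Matrix (Fin n) (Fin n) ℝ), Mᵀ = M → ∀ p r : Fin n → ℝ,
      (M *ᵥ p) ⬝ᵥ r = p ⬝ᵥ (M *ᵥ r) := by
    intro M hM p r
    rw [dotProduct_mulVec p M r, ← mulVec_transpose, hM]
  have hww : w ⬝ᵥ w = u ⬝ᵥ y := by
    rw [hy, ← hsymdot S⁻¹ hSisym u w, hw]
  -- quantities
  have hp : u ⬝ᵥ y = v₁ ⬝ᵥ (A *ᵥ y) + v₂ ⬝ᵥ (B *ᵥ y) := by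
    rw [hu, add_dotProduct, hsymdot A hAsym v₁ y, hsymdot B hBsym v₂ y]
  have hAy : (A *ᵥ y) ⬝ᵥ (A *ᵥ y) = y ⬝ᵥ (Q₁ *ᵥ y) := by
    rw [hsymdot A hAsym y (A *ᵥ y), mulVec_mulVec, hAA]
  have hBy : (B *ᵥ y) ⬝ᵥ (B *ᵥ y) = y ⬝ᵥ (Q₂ *ᵥ y) := by
    rw [hsymdot B hBsym y (B *ᵥ y), mulVec_mulVec, hBB]
  have hyQ : y ⬝ᵥ u = (1/lam) * (y ⬝ᵥ (Q₁ *ᵥ y)) + (1/(1-lam)) * (y ⬝ᵥ (Q₂ *ᵥ y)) := by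
    rw [← hQy, hQdef, add_mulVec, dotProduct_add, smul_mulVec, smul_mulVec,
      dotProduct_smul, dotProduct_smul, smul_eq_mul, smul_eq_mul]
  have ineq1 : 2 * (v₁ ⬝ᵥ (A *ᵥ y)) ≤ lam * (v₁ ⬝ᵥ v₁) + lam⁻¹ * (y ⬝ᵥ (Q₁ *ᵥ y)) := by
    have := amgm_dot v₁ (A *ᵥ y) hl0
    rwa [hAy] at this
  have ineq2 : 2 * (v₂ ⬝ᵥ (B *ᵥ y)) ≤ (1-lam) * (v₂ ⬝ᵥ v₂) + (1-lam)⁻¹ * (y ⬝ᵥ (Q₂ *ᵥ y)) := by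
    have := amgm_dot v₂ (B *ᵥ y) h1l
    rwa [hBy] at this
  have huy : u ⬝ᵥ y ≤ 1 := by
    have hcomm : y ⬝ᵥ u = u ⬝ᵥ y := dotProduct_comm y u
    have e1 : (1/lam : ℝ) = lam⁻¹ := one_div lam
    have e2 : (1/(1-lam) : ℝ) = (1-lam)⁻¹ := one_div _
    rw [e1, e2] at hyQ
    nlinarith [hv₁, hv₂, ineq1, ineq2, hp, hyQ, hcomm, hl0, h1l,
      dot_self_nonneg' v₁, dot_self_nonneg' v₂]
  refine ⟨hQ.posSemidef, w, ?_, ?_⟩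
  · rw [hww]; exact huy
  · show q₁ + A *ᵥ v₁ + (q₂ + B *ᵥ v₂) = q₁ + q₂ + S *ᵥ w
    rw [hSw, hu]
    abel

end
end
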